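/- For every n ≥ 1 and every k ≤ n, the number of b with 0 ≤ b < 2^n such that m(b,n) = k equals the binomial coefficient C(n,k). -/

import Mathlib

def T (N : ℕ) : ℕ := if N % 2 = 0 then N / 2 else (3 * N + 1) / 2

def m (b n : ℕ) : ℕ := ((Finset.range n).filter (fun k => Odd (T^[k] b))).card

/-! Adding `2 ^ n * c` to `x` adds `3 ^ m(x, n) * c` to `T^[n] x`, so the first `n` parities of the
orbit depend only on `x mod 2 ^ n`, while adding `2 ^ n` flips the parity of the `n`-th iterate.
Hence among `a` and `a + 2 ^ n` exactly one gains an odd step at time `n`, which gives Pascal's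
recurrence for the number of `b < 2 ^ n` with `m(b, n) = k`. -/

open Finset

lemma T_two_mul_add (d y : ℕ) : T (2 * d + y) = (if y % 2 = 0 then d else 3 * d) + T y := by
  unfold T
  split_ifs <;> omega

lemma m_succ (x n : ℕ) : m x (n + 1) = m x n + if Odd (T^[n] x) then 1 else 0 := by
  simp only [m, card_filter, sum_range_succ]

lemma iterate_T_two_pow_mul_add (n c x : ℕ) :
    T^[n] (2 ^ n * c + x) = 3 ^ m x n * c + T^[n] x := by
  induction n generalizing c with
  | zero => simp [m]
  | succ n ih =>
    rw [pow_succ, mul_assoc, Function.iterate_succ_apply', Function.iterate_succ_apply', ih,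
      mul_left_comm, T_two_mul_add, m_succ]
    rcases Nat.even_or_odd (T^[n] x) with h | h
    · rw [if_pos (Nat.even_iff.mp h), if_neg (Nat.not_odd_iff_even.mpr h)]
      ring
    · rw [if_neg (by rw [Nat.odd_iff.mp h]; decide), if_pos h]
      ring

lemma odd_iterate_T_two_pow_mul_add_iff {j n : ℕ} (hj : j < n) (c x : ℕ) :
    Odd (T^[j] (2 ^ n * c + x)) ↔ Odd (T^[j] x) := by
  obtain ⟨i, rfl⟩ := Nat.exists_eq_add_of_lt hj
  have hc : 2 ^ (j + i + 1) * c = 2 ^ j * (2 * (2 ^ i * c)) := by ring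
  rw [hc, iterate_T_two_pow_mul_add, mul_left_comm, Nat.odd_add',
    iff_true_intro (even_two_mul _), iff_true]

lemma m_two_pow_mul_add (n c x : ℕ) : m (2 ^ n * c + x) n = m x n := by
  unfold m
  congr 1
  exact filter_congr fun j hj ↦ odd_iterate_T_two_pow_mul_add_iff (mem_range.mp hj) c x

lemma odd_iterate_T_two_pow_add_iff (n x : ℕ) :
    Odd (T^[n] (2 ^ n + x)) ↔ ¬Odd (T^[n] x) := by
  have h := iterate_T_two_pow_mul_add n 1 x
  rw [mul_one, mul_one] at h
  have h3 : Odd (3 ^ m x n) := Odd.pow (by decide)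
  rw [h, Nat.odd_add', iff_false_intro (Nat.not_even_iff_odd.mpr h3), iff_false]

lemma m_succ_two_pow_add (n a : ℕ) :
    m a (n + 1) = m a n ∧ m (2 ^ n + a) (n + 1) = m a n + 1 ∨
      m a (n + 1) = m a n + 1 ∧ m (2 ^ n + a) (n + 1) = m a n := by
  have h := m_two_pow_mul_add n 1 a
  rw [mul_one] at h
  simp only [m_succ, h, odd_iterate_T_two_pow_add_iff]
  by_cases hodd : Odd (T^[n] a) <;> simp [hodd]

lemma card_filter_m_succ (n k : ℕ) :
    #{b ∈ range (2 ^ (n + 1)) | m b (n + 1) = k} =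
      #{a ∈ range (2 ^ n) | m a n = k} + #{a ∈ range (2 ^ n) | m a n + 1 = k} := by
  simp only [card_filter]
  rw [pow_succ, mul_two, sum_range_add, ← sum_add_distrib, ← sum_add_distrib]
  refine sum_congr rfl fun a _ ↦ ?_
  rcases m_succ_two_pow_add n a with ⟨h, h'⟩ | ⟨h, h'⟩ <;> rw [h, h']
  exact add_comm _ _

lemma card_filter_m_eq_choose (n k : ℕ) : #{b ∈ range (2 ^ n) | m b n = k} = n.choose k := by
  induction n generalizing k with
  | zero => cases k <;> simp [m]
  | succ n ih =>
    rw [card_filter_m_succ, ih]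
    cases k with
    | zero => simp
    | succ j => simp only [Nat.add_right_cancel_iff, ih, Nat.choose_succ_succ', add_comm]

theorem stmt12 : ∀ n ≥ 1, ∀ k ≤ n,
    ((Finset.range (2 ^ n)).filter (fun b => m b n = k)).card = Nat.choose n k := by
  intro n _ k _
  exact card_filter_m_eq_choose n k
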